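/- Every idempotent in the Temperley-Lieb diagram category D splits: if i : n → n satisfies i ∘ i = i, then there exist morphisms e : n → k and m : k → n with i = m ∘ e and e ∘ m = id_k. -/

import Mathlib

open Sum Relation

/-- A fixed-point free involution. -/
def FPF {X : Type*} (f : X → X) : Prop :=
  Function.Involutive f ∧ ∀ x, f x ≠ x

/-- Condition (PL1) for `f` with respect to the order on `X`:
if `i < j < f i` then `i < f j < f i`. -/
def PL1 {X : Type*} [Preorder X] (f : X → X) : Prop :=
  ∀ i j, i < j → j < f i → i < f j ∧ f j < f i

/-- Incomparability `x # y`. -/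
def Incomp {X : Type*} [Preorder X] (x y : X) : Prop :=
  ¬ (x ≤ y) ∧ ¬ (y ≤ x)

/-- Condition (PL2): if `f i # i`, `i < j` and `j # f j` then `f i < f j`. -/
def PL2 {X : Type*} [Preorder X] (f : X → X) : Prop :=
  ∀ i j, Incomp (f i) i → i < j → Incomp j (f j) → f i < f j

/-- A planar involution on `[n] ⊕ [m]` (with the disjoint-sum partial order):
a fixed-point free involution satisfying (PL1) and (PL2).  These are the
elements of `P(n, m)`. -/
def Planar {n m : ℕ} (f : Fin n ⊕ Fin m → Fin n ⊕ Fin m) : Prop :=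
  FPF f ∧ PL1 f ∧ PL2 f

/-- The graph relation of a function. -/
def graphRel {X : Type*} (f : X → X) : X → X → Prop := fun x y => f x = y

/-- The execution formula: the Geometry-of-Interaction composite of a relation
`R` on `A ⊕ B` and a relation `S` on `B ⊕ C`, defined componentwise by
`θ_{A,A} = R_{A,A} ∪ R_{A,B};S_{B,B};(R_{B,B};S_{B,B})*;R_{B,A}`,
`θ_{A,C} = R_{A,B};(S_{B,B};R_{B,B})*;S_{B,C}`,
`θ_{C,A} = S_{C,B};(R_{B,B};S_{B,B})*;R_{B,A}`,
`θ_{C,C} = S_{C,C} ∪ S_{C,B};R_{B,B};(S_{B,B};R_{B,B})*;S_{B,C}`. -/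
def ExecR {A B C : Type*} (R : A ⊕ B → A ⊕ B → Prop) (S : B ⊕ C → B ⊕ C → Prop) :
    A ⊕ C → A ⊕ C → Prop :=
  let Raa : A → A → Prop := fun i j => R (Sum.inl i) (Sum.inl j)
  let Rab : A → B → Prop := fun i j => R (Sum.inl i) (Sum.inr j)
  let Rba : B → A → Prop := fun i j => R (Sum.inr i) (Sum.inl j)
  let Rbb : B → B → Prop := fun i j => R (Sum.inr i) (Sum.inr j)
  let Sbb : B → B → Prop := fun i j => S (Sum.inl i) (Sum.inl j)
  let Sbc : B → C → Prop := fun i j => S (Sum.inl i) (Sum.inr j)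
  let Scb : C → B → Prop := fun i j => S (Sum.inr i) (Sum.inl j)
  let Scc : C → C → Prop := fun i j => S (Sum.inr i) (Sum.inr j)
  fun x y =>
    match x, y with
    | Sum.inl i, Sum.inl j =>
        Raa i j ∨
          Relation.Comp Rab
            (Relation.Comp Sbb
              (Relation.Comp (Relation.ReflTransGen (Relation.Comp Rbb Sbb)) Rba)) i j
    | Sum.inl i, Sum.inr j =>
        Relation.Comp Rab
          (Relation.Comp (Relation.ReflTransGen (Relation.Comp Sbb Rbb)) Sbc) i j
    | Sum.inr i, Sum.inl j =>
        Relation.Comp Scb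
          (Relation.Comp (Relation.ReflTransGen (Relation.Comp Rbb Sbb)) Rba) i j
    | Sum.inr i, Sum.inr j =>
        Scc i j ∨
          Relation.Comp Scb
            (Relation.Comp Rbb
              (Relation.Comp (Relation.ReflTransGen (Relation.Comp Sbb Rbb)) Sbc)) i j

/-- The execution-formula composite of two involutions, as a function: for
planar involutions the execution relation is the graph of a function, and
`execFun f g` is that function. -/
noncomputable def execFun {n m p : ℕ} (f : Fin n ⊕ Fin m → Fin n ⊕ Fin m)
    (g : Fin m ⊕ Fin p → Fin m ⊕ Fin p) : Fin n ⊕ Fin p → Fin n ⊕ Fin p :=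
  fun x =>
    @dite _ (∃ y, ExecR (graphRel f) (graphRel g) x y) (Classical.propDecidable _)
      (fun h => h.choose) (fun _ => x)

/-- The partial bijection `Cyc(f,g) = f_{m,m} ; g_{m,m}` on `[m]`:
relational composition of the caps of `f` with the cups of `g`. -/
def Cyc {n m p : ℕ} (f : Fin n ⊕ Fin m → Fin n ⊕ Fin m)
    (g : Fin m ⊕ Fin p → Fin m ⊕ Fin p) : Fin m → Fin m → Prop :=
  Relation.Comp (fun i j => f (Sum.inr i) = Sum.inr j)
    (fun i j => g (Sum.inl i) = Sum.inl j)

/-- Iterated relational composition `r^k` (with `r^0` the identity). -/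
def relPow {α : Type*} (r : α → α → Prop) : ℕ → α → α → Prop
  | 0 => Eq
  | k + 1 => Relation.Comp r (relPow r k)

/-- `i` is a cyclic element of `r`: `r^k i i` for some `k > 0`. -/
def Cyclic {α : Type*} (r : α → α → Prop) (i : α) : Prop :=
  ∃ k, 0 < k ∧ relPow r k i i

/-- The cycle (orbit) of `i` under `r`. -/
def cycleOf {α : Type*} (r : α → α → Prop) (i : α) : Set α :=
  {j | ∃ k, relPow r k i j}

/-- `Z(f,g)`: the number of distinct cycles of `Cyc(f,g)`. -/
noncomputable def Z {n m p : ℕ} (f : Fin n ⊕ Fin m → Fin n ⊕ Fin m)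
    (g : Fin m ⊕ Fin p → Fin m ⊕ Fin p) : ℕ :=
  {S : Set (Fin m) | ∃ i, Cyclic (Cyc f g) i ∧ S = cycleOf (Cyc f g) i}.ncard

/-- A morphism `n → m` of the Temperley-Lieb category: a loop count together
with a function on `[n] ⊕ [m]` (required to be a planar involution for
genuine morphisms). -/
def TLHom (n m : ℕ) : Type :=
  ℕ × (Fin n ⊕ Fin m → Fin n ⊕ Fin m)

/-- Composition in the Temperley-Lieb category:
`(t, g) ∘ (s, f) = (s + t + Z(f,g), f;g)`. -/
noncomputable def TLcomp {n m p : ℕ} (F : TLHom n m) (G : TLHom m p) : TLHom n p :=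
  (F.1 + G.1 + Z F.2 G.2, execFun F.2 G.2)

/-- The identity morphism: zero loops and the twist involution `i ↔ i'`. -/
def tlid (n : ℕ) : TLHom n n :=
  (0, Sum.swap)

/-- `f` has a cup: two top-row elements are paired with each other. -/
def HasCup {n m : ℕ} (f : Fin n ⊕ Fin m → Fin n ⊕ Fin m) : Prop :=
  ∃ i j : Fin n, f (Sum.inl i) = Sum.inl j

/-- `f` has a cap: two bottom-row elements are paired with each other. -/
def HasCap {n m : ℕ} (f : Fin n ⊕ Fin m → Fin n ⊕ Fin m) : Prop :=
  ∃ i j : Fin m, f (Sum.inr i) = Sum.inr j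

/-- `F : n → m` is monic in the diagram category `D`: left-cancellable with
respect to all morphisms of `D` (pairs of a loop count and a planar
involution). -/
def Monic {n m : ℕ} (F : TLHom n m) : Prop :=
  ∀ (p : ℕ) (G H : TLHom p n), Planar G.2 → Planar H.2 →
    TLcomp G F = TLcomp H F → G = H

/-- `F : n → m` is epic in the diagram category `D`: right-cancellable with
respect to all morphisms of `D`. -/
def Epic {n m : ℕ} (F : TLHom n m) : Prop :=
  ∀ (p : ℕ) (G H : TLHom m p), Planar G.2 → Planar H.2 →
    TLcomp F G = TLcomp F H → G = H

/-!
An idempotent `f` has no loops, satisfies `Z(f, f) = 0` and `f ; f = f`. Let its through strands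
join the top points `τ 0 < ⋯ < τ (k-1)` to the bottom points `β 0 < ⋯ < β (k-1)`. The epi factor
keeps the cups of `f` and ends the `i`-th through strand at `i`; the mono factor keeps the caps
and starts it at `i`. Composed in this order they give back `f` without closing loops, the epi
factor having no caps. In the other order the strand entering at the top point `i` reaches `β i`
and then alternates between cups and caps of `f`; idempotence says precisely that this walk ends at
`τ i`, so the strand leaves at the bottom point `i`, and the closed loops are those of `f ; f`,
of which there are none. Statements about the bottom side follow from those about the top side by
turning diagrams upside down (`dagger`), which reverses the execution formula.
-/

section Dagger

variable {α β : Type*}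

def dagger (f : α ⊕ β → α ⊕ β) : β ⊕ α → β ⊕ α :=
  swap ∘ f ∘ swap

@[simp] theorem dagger_inl (f : α ⊕ β → α ⊕ β) (b : β) : dagger f (inl b) = (f (inr b)).swap :=
  rfl

@[simp] theorem dagger_inr (f : α ⊕ β → α ⊕ β) (a : α) : dagger f (inr a) = (f (inl a)).swap :=
  rfl

@[simp] theorem dagger_dagger (f : α ⊕ β → α ⊕ β) : dagger (dagger f) = f := by
  funext x
  simp [dagger]

theorem swap_eq_iff_eq_swap {x : α ⊕ β} {y : β ⊕ α} : x.swap = y ↔ x = y.swap := by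
  constructor <;> rintro rfl <;> simp

theorem graphRel_dagger (f : α ⊕ β → α ⊕ β) :
    graphRel (dagger f) = fun x y => graphRel f x.swap y.swap := by
  funext x y
  simp [graphRel, dagger, swap_eq_iff_eq_swap]

theorem FPF.dagger {f : α ⊕ β → α ⊕ β} (h : FPF f) : FPF (dagger f) :=
  ⟨fun x => by simp [_root_.dagger, h.1 x.swap],
    fun x hx => h.2 x.swap (by simpa [_root_.dagger, swap_eq_iff_eq_swap] using hx)⟩

variable [Preorder α] [Preorder β]

theorem lt_swap_iff {x : α ⊕ β} {y : β ⊕ α} : x < y.swap ↔ x.swap < y := by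
  rw [← swap_lt_swap_iff, swap_swap]

theorem incomp_swap_iff {x y : α ⊕ β} : Incomp x.swap y.swap ↔ Incomp x y := by
  simp [Incomp, swap_le_swap_iff]

theorem PL1.dagger {f : α ⊕ β → α ⊕ β} (h : PL1 f) : PL1 (dagger f) := by
  intro i j hij hjf
  have key := h i.swap j.swap (swap_lt_swap_iff.2 hij) (lt_swap_iff.1 hjf)
  simp only [_root_.dagger, Function.comp_apply, lt_swap_iff]
  simpa [swap_lt_swap_iff] using key

theorem PL2.dagger {f : α ⊕ β → α ⊕ β} (h : PL2 f) : PL2 (dagger f) := by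
  intro i j hi hij hj
  simp only [_root_.dagger, Function.comp_apply] at hi hj ⊢
  rw [swap_lt_swap_iff]
  rw [← incomp_swap_iff, swap_swap] at hi hj
  exact h _ _ hi (swap_lt_swap_iff.2 hij) hj

theorem Planar.dagger {n m : ℕ} {f : Fin n ⊕ Fin m → Fin n ⊕ Fin m} (h : Planar f) :
    Planar (dagger f) :=
  ⟨h.1.dagger, h.2.1.dagger, h.2.2.dagger⟩

end Dagger

theorem execR_swap {A B C : Type*} (R : A ⊕ B → A ⊕ B → Prop) (S : B ⊕ C → B ⊕ C → Prop)
    (x y : C ⊕ A) :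
    ExecR (fun a b => S a.swap b.swap) (fun a b => R a.swap b.swap) x y ↔
      ExecR R S x.swap y.swap := by
  rcases x with x | x <;> rcases y with y | y <;> exact Iff.rfl

theorem execR_graphRel_dagger {A B C : Type*} (u : A ⊕ B → A ⊕ B) (v : B ⊕ C → B ⊕ C)
    (x y : C ⊕ A) :
    ExecR (graphRel (dagger v)) (graphRel (dagger u)) x y ↔
      ExecR (graphRel u) (graphRel v) x.swap y.swap := by
  rw [graphRel_dagger, graphRel_dagger]
  exact execR_swap _ _ x y

theorem execFun_eq_of_execR_iff {n m p : ℕ} {u : Fin n ⊕ Fin m → Fin n ⊕ Fin m}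
    {v : Fin m ⊕ Fin p → Fin m ⊕ Fin p} {w : Fin n ⊕ Fin p → Fin n ⊕ Fin p}
    (h : ∀ x y, ExecR (graphRel u) (graphRel v) x y ↔ y = w x) : execFun u v = w := by
  funext x
  have hex : ∃ y, ExecR (graphRel u) (graphRel v) x y := ⟨w x, (h x _).2 rfl⟩
  rw [execFun, dif_pos hex]
  exact (h x _).1 hex.choose_spec

theorem execR_execFun_of_ne {n m p : ℕ} {u : Fin n ⊕ Fin m → Fin n ⊕ Fin m}
    {v : Fin m ⊕ Fin p → Fin m ⊕ Fin p} {x : Fin n ⊕ Fin p} (h : execFun u v x ≠ x) :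
    ExecR (graphRel u) (graphRel v) x (execFun u v x) := by
  rw [execFun] at h ⊢
  split_ifs at h ⊢ with hex
  · exact hex.choose_spec
  · exact absurd rfl h

theorem Z_eq_zero_of_not_hasCap {n m p : ℕ} {f : Fin n ⊕ Fin m → Fin n ⊕ Fin m}
    (g : Fin m ⊕ Fin p → Fin m ⊕ Fin p) (hf : ¬ HasCap f) : Z f g = 0 := by
  have : ∀ i, ¬ Cyclic (Cyc f g) i := by
    rintro i ⟨_ | k, hk, ⟨_, ⟨c, hc, -⟩, -⟩⟩
    · exact absurd hk (lt_irrefl 0)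
    · exact hf ⟨_, _, hc⟩
  simp [Z, this]

theorem Relation.ReflTransGen.eq_of_right_unique {α : Type*} {r : α → α → Prop} {a b c : α}
    (U : Relator.RightUnique r) (hab : ReflTransGen r a b) (hac : ReflTransGen r a c)
    (hb : ∀ d, ¬ r b d) (hc : ∀ d, ¬ r c d) : b = c := by
  rcases hab.total_of_right_unique U hac with h | h
  · exact (h.cases_head.resolve_right fun ⟨d, hd, _⟩ => hb d hd)
  · exact (h.cases_head.resolve_right fun ⟨d, hd, _⟩ => hc d hd).symm

section CupCap

variable {n : ℕ} (f : Fin n ⊕ Fin n → Fin n ⊕ Fin n)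

def cupCap : Fin n → Fin n → Prop :=
  Comp (fun a b => f (inl a) = inl b) (fun a b => f (inr a) = inr b)

theorem cupCap_rightUnique : Relator.RightUnique (cupCap f) := by
  rintro a b c ⟨u, hu, hub⟩ ⟨v, hv, hvc⟩
  obtain rfl : u = v := inl_injective (hu.symm.trans hv)
  exact inr_injective (hub.symm.trans hvc)

theorem cupCap_dagger : cupCap (dagger f) = Cyc f f := by
  funext a b
  simp [cupCap, Cyc, Comp, swap_eq_iff_eq_swap]

variable {f}

theorem reflTransGen_cyc_of_cupCap (hf : Function.Involutive f) {a b : Fin n}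
    (h : ReflTransGen (cupCap f) a b) : ReflTransGen (Cyc f f) b a := by
  rw [← reflTransGen_swap]
  exact ReflTransGen.mono (fun x y ⟨u, hxu, huy⟩ =>
    ⟨u, (congrArg f huy).symm.trans (hf _), (congrArg f hxu).symm.trans (hf _)⟩) _ _ h

/-- Both walks trace the same strand of `f`, which ends at the through-strand end `x`. -/
theorem cupCap_walk_capped {a x c d y z : Fin n}
    (hax : ReflTransGen (cupCap f) a x) (hx : f (inl x) = inr y)
    (hac : f (inl a) = inl c) (hcd : ReflTransGen (Cyc f f) c d) : f (inr d) ≠ inl z := by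
  induction hax using ReflTransGen.head_induction_on generalizing c with
  | refl => exact absurd (hx.symm.trans hac) inr_ne_inl
  | head hstep _ ih =>
      obtain ⟨u, hu, hcap⟩ := hstep
      obtain rfl : c = u := inl_injective (hac.symm.trans hu)
      rcases hcd.cases_head with rfl | ⟨e, ⟨w, hw, hwe⟩, hed⟩
      · rw [hcap]
        exact inr_ne_inl
      · obtain rfl : w = _ := inr_injective (hw.symm.trans hcap)
        exact ih hwe hed

end CupCap

section SumOrder

variable {α β : Type*}

theorem incomp_inl_inr [Preorder α] [Preorder β] (a : α) (b : β) :
    Incomp (inl a : α ⊕ β) (inr b) :=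
  ⟨not_inl_le_inr, not_inr_le_inl⟩

theorem incomp_inr_inl [Preorder α] [Preorder β] (a : α) (b : β) :
    Incomp (inr b : α ⊕ β) (inl a) :=
  ⟨not_inr_le_inl, not_inl_le_inr⟩

theorem exists_eq_inr_of_incomp_inl [LinearOrder α] [Preorder β] {x : α ⊕ β} {a : α}
    (h : Incomp x (inl a)) : ∃ b, x = inr b := by
  rcases x with a' | b
  · exact (le_total a' a).elim (fun hle => absurd (inl_le_inl_iff.2 hle) h.1)
      (fun hle => absurd (inl_le_inl_iff.2 hle) h.2)
  · exact ⟨b, rfl⟩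

end SumOrder

section ThroughStrands

variable {n m k : ℕ}

structure ThroughStrands (f : Fin n ⊕ Fin m → Fin n ⊕ Fin m) (τ : Fin k → Fin n)
    (β : Fin k → Fin m) : Prop where
  strictMono_top : StrictMono τ
  strictMono_bot : StrictMono β
  apply_top : ∀ i, f (inl (τ i)) = inr (β i)
  apply_bot : ∀ i, f (inr (β i)) = inl (τ i)
  top_cases : ∀ x, (∃ i, τ i = x) ∨ ∃ y, f (inl x) = inl y
  bot_cases : ∀ x, (∃ i, β i = x) ∨ ∃ y, f (inr x) = inr y

variable {f : Fin n ⊕ Fin m → Fin n ⊕ Fin m} {τ : Fin k → Fin n} {β : Fin k → Fin m}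

theorem ThroughStrands.dagger (hs : ThroughStrands f τ β) : ThroughStrands (dagger f) β τ where
  strictMono_top := hs.strictMono_bot
  strictMono_bot := hs.strictMono_top
  apply_top i := by simp [hs.apply_bot]
  apply_bot i := by simp [hs.apply_top]
  top_cases x := by simpa [swap_eq_iff_eq_swap] using hs.bot_cases x
  bot_cases x := by simpa [swap_eq_iff_eq_swap] using hs.top_cases x

theorem ThroughStrands.apply_inl_eq_inr_iff (hs : ThroughStrands f τ β) {x : Fin n} {y : Fin m} :
    f (inl x) = inr y ↔ ∃ i, x = τ i ∧ β i = y := by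
  constructor
  · intro h
    rcases hs.top_cases x with ⟨i, rfl⟩ | ⟨y', hy'⟩
    · exact ⟨i, rfl, inr_injective ((hs.apply_top i).symm.trans h)⟩
    · exact absurd (hy'.symm.trans h) inl_ne_inr
  · rintro ⟨i, rfl, rfl⟩
    exact hs.apply_top i

theorem PL2.strictMono_of_apply_inl (h : PL2 f)
    (hτ : StrictMono τ) (hτβ : ∀ i, f (inl (τ i)) = inr (β i)) : StrictMono β := by
  intro i j hij
  have key := h (inl (τ i)) (inl (τ j)) (by rw [hτβ]; exact incomp_inr_inl _ _)
    (inl_lt_inl_iff.2 (hτ hij)) (by rw [hτβ]; exact incomp_inl_inr _ _)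
  rw [hτβ, hτβ] at key
  exact inr_lt_inr_iff.1 key

theorem Planar.exists_throughStrands (hf : Planar f) :
    ∃ (k : ℕ) (τ : Fin k → Fin n) (β : Fin k → Fin m), ThroughStrands f τ β := by
  classical
  set T := Finset.univ.filter fun x => ∃ y, f (inl x) = inr y with hT
  set τ := T.orderEmbOfFin rfl
  have mem_range_τ : ∀ x, x ∈ Set.range τ ↔ ∃ y, f (inl x) = inr y := fun x => by
    rw [Finset.range_orderEmbOfFin]
    simp [hT]
  choose β hβ using fun i => (mem_range_τ (τ i)).1 ⟨i, rfl⟩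
  have hβ' : ∀ i, f (inr (β i)) = inl (τ i) := fun i => by rw [← hβ i, hf.1.1]
  refine ⟨T.card, τ, β, τ.strictMono, hf.2.2.strictMono_of_apply_inl τ.strictMono hβ, hβ, hβ',
    fun x => ?_, fun x => ?_⟩
  · rcases hx : f (inl x) with y | y
    · exact .inr ⟨y, rfl⟩
    · exact .inl ((mem_range_τ x).2 ⟨y, hx⟩)
  · rcases hx : f (inr x) with y | y
    · obtain ⟨i, rfl⟩ := (mem_range_τ y).2 ⟨x, by rw [← hx, hf.1.1]⟩
      exact .inl ⟨i, inr_injective (by rw [← hβ i, ← hx, hf.1.1])⟩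
    · exact .inr ⟨y, rfl⟩

end ThroughStrands

section Factors

variable {n m k : ℕ}

/-- Keeps the cups of `f` and bends its through strands so that the one starting at `τ i` ends
at the bottom point `i` (the default `x` of `getD` is never used once `τ` enumerates the through
strands). -/
noncomputable def epiFactor (f : Fin n ⊕ Fin m → Fin n ⊕ Fin m) (τ : Fin k → Fin n) :
    Fin n ⊕ Fin k → Fin n ⊕ Fin k
  | inl x => if h : ∃ i, τ i = x then inr h.choose else inl ((f (inl x)).getLeft?.getD x)
  | inr i => inl (τ i)

noncomputable def monoFactor (f : Fin n ⊕ Fin m → Fin n ⊕ Fin m) (β : Fin k → Fin m) :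
    Fin k ⊕ Fin m → Fin k ⊕ Fin m :=
  dagger (epiFactor (dagger f) β)

theorem not_hasCap_epiFactor (f : Fin n ⊕ Fin m → Fin n ⊕ Fin m) (τ : Fin k → Fin n) :
    ¬ HasCap (epiFactor f τ) :=
  fun ⟨_, _, h⟩ => inl_ne_inr h

variable {f : Fin n ⊕ Fin m → Fin n ⊕ Fin m} {τ : Fin k → Fin n} {β : Fin k → Fin m}

@[simp] theorem epiFactor_inr (i : Fin k) : epiFactor f τ (inr i) = inl (τ i) :=
  rfl

@[simp] theorem monoFactor_inl (i : Fin k) : monoFactor f β (inl i) = inr (β i) :=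
  rfl

namespace ThroughStrands

variable (hs : ThroughStrands f τ β)
include hs

theorem epiFactor_inl_top (i : Fin k) : epiFactor f τ (inl (τ i)) = inr i := by
  have h : ∃ j, τ j = τ i := ⟨i, rfl⟩
  rw [epiFactor, dif_pos h, hs.strictMono_top.injective h.choose_spec]

theorem epiFactor_inl_of_apply {x y : Fin n} (h : f (inl x) = inl y) :
    epiFactor f τ (inl x) = inl y := by
  have hx : ¬ ∃ i, τ i = x := by
    rintro ⟨i, rfl⟩
    exact inr_ne_inl ((hs.apply_top i).symm.trans h)
  rw [epiFactor, dif_neg hx, h]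
  rfl

theorem epiFactor_inl_eq_inl_iff {x y : Fin n} :
    epiFactor f τ (inl x) = inl y ↔ f (inl x) = inl y := by
  refine ⟨fun h => ?_, hs.epiFactor_inl_of_apply⟩
  rcases hs.top_cases x with ⟨i, rfl⟩ | ⟨y', hy'⟩
  · exact absurd ((hs.epiFactor_inl_top i).symm.trans h) inr_ne_inl
  · rw [hy', inl_injective ((hs.epiFactor_inl_of_apply hy').symm.trans h)]

theorem epiFactor_inl_eq_inr_iff {x : Fin n} {i : Fin k} :
    epiFactor f τ (inl x) = inr i ↔ x = τ i := by
  refine ⟨fun h => ?_, fun h => h ▸ hs.epiFactor_inl_top i⟩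
  rcases hs.top_cases x with ⟨j, rfl⟩ | ⟨y, hy⟩
  · rw [hs.epiFactor_inl_top j] at h
    rw [inr_injective h]
  · exact absurd ((hs.epiFactor_inl_of_apply hy).symm.trans h) inl_ne_inr

theorem monoFactor_inr_eq_inr_iff {x y : Fin m} :
    monoFactor f β (inr x) = inr y ↔ f (inr x) = inr y := by
  simp [monoFactor, swap_eq_iff_eq_swap, hs.dagger.epiFactor_inl_eq_inl_iff]

theorem monoFactor_inr_eq_inl_iff {x : Fin m} {i : Fin k} :
    monoFactor f β (inr x) = inl i ↔ x = β i := by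
  simp [monoFactor, swap_eq_iff_eq_swap, hs.dagger.epiFactor_inl_eq_inr_iff]

theorem epiFactor_involutive (hf : Function.Involutive f) :
    Function.Involutive (epiFactor f τ) := by
  rintro (x | i)
  · rcases hs.top_cases x with ⟨i, rfl⟩ | ⟨y, hy⟩
    · rw [hs.epiFactor_inl_top, epiFactor_inr]
    · have hyx : f (inl y) = inl x := by rw [← hy, hf]
      rw [hs.epiFactor_inl_of_apply hy, hs.epiFactor_inl_of_apply hyx]
  · rw [epiFactor_inr, hs.epiFactor_inl_top]

theorem epiFactor_ne (hf : ∀ x, f x ≠ x) (x : Fin n ⊕ Fin k) : epiFactor f τ x ≠ x := by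
  rcases x with x | i
  · rcases hs.top_cases x with ⟨i, rfl⟩ | ⟨y, hy⟩
    · rw [hs.epiFactor_inl_top]
      exact inr_ne_inl
    · rw [hs.epiFactor_inl_of_apply hy]
      intro h
      rw [inl_injective h] at hy
      exact hf _ hy
  · exact inl_ne_inr

theorem PL1_epiFactor (hf : PL1 f) : PL1 (epiFactor f τ) := by
  rintro (x | a) (u | c) hij hjg
  · rcases hg : epiFactor f τ (inl x) with y | i <;> rw [hg] at hjg
    · have hy := hs.epiFactor_inl_eq_inl_iff.1 hg
      have key := hf (inl x) (inl u) (by simpa using hij) (by simpa [hy] using hjg)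
      rcases hu : f (inl u) with v | v <;> rw [hu, hy] at key
      · rw [hs.epiFactor_inl_of_apply hu]
        simpa using key
      · exact absurd key.2 not_inr_lt_inl
    · exact absurd hjg not_inl_lt_inr
  · exact absurd hij not_inl_lt_inr
  · exact absurd hij not_inr_lt_inl
  · exact absurd hjg not_inr_lt_inl

theorem PL2_epiFactor : PL2 (epiFactor f τ) := by
  rintro (x | a) (u | c) hi hij hj
  · obtain ⟨a, ha⟩ := exists_eq_inr_of_incomp_inl hi
    obtain ⟨c, hc⟩ := exists_eq_inr_of_incomp_inl hj.symm
    rw [ha, hc]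
    rw [hs.epiFactor_inl_eq_inr_iff] at ha hc
    subst ha hc
    exact inr_lt_inr_iff.2 (hs.strictMono_top.lt_iff_lt.1 (inl_lt_inl_iff.1 hij))
  · exact absurd hij not_inl_lt_inr
  · exact absurd hij not_inr_lt_inl
  · simpa using hs.strictMono_top (inr_lt_inr_iff.1 hij)

theorem planar_epiFactor (hf : FPF f) (hf₁ : PL1 f) : Planar (epiFactor f τ) :=
  ⟨⟨hs.epiFactor_involutive hf.1, hs.epiFactor_ne hf.2⟩, hs.PL1_epiFactor hf₁, hs.PL2_epiFactor⟩

theorem planar_monoFactor (hf : FPF f) (hf₁ : PL1 f) : Planar (monoFactor f β) :=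
  (hs.dagger.planar_epiFactor hf.dagger hf₁.dagger).dagger

end ThroughStrands

end Factors

section Execution

variable {n m k : ℕ}

theorem dagger_epiFactor (f : Fin n ⊕ Fin m → Fin n ⊕ Fin m) (τ : Fin k → Fin n) :
    dagger (epiFactor f τ) = monoFactor (dagger f) τ := by
  simp [monoFactor]

theorem dagger_monoFactor (f : Fin n ⊕ Fin m → Fin n ⊕ Fin m) (β : Fin k → Fin m) :
    dagger (monoFactor f β) = epiFactor (dagger f) β :=
  dagger_dagger _

variable {f : Fin n ⊕ Fin m → Fin n ⊕ Fin m} {τ : Fin k → Fin n} {β : Fin k → Fin m}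

theorem ThroughStrands.execR_factors_inl (hs : ThroughStrands f τ β) (x : Fin n)
    (y : Fin n ⊕ Fin m) :
    ExecR (graphRel (epiFactor f τ)) (graphRel (monoFactor f β)) (inl x) y ↔ y = f (inl x) := by
  rcases y with y | y
  · simp only [ExecR, graphRel]
    simp [Comp, hs.epiFactor_inl_eq_inl_iff, eq_comm]
  · simp only [ExecR, graphRel]
    rw [eq_comm, hs.apply_inl_eq_inr_iff]
    simp [Comp, reflTransGen_iff_eq, hs.epiFactor_inl_eq_inr_iff]

theorem ThroughStrands.execFun_epiFactor_monoFactor (hs : ThroughStrands f τ β) :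
    execFun (epiFactor f τ) (monoFactor f β) = f := by
  refine execFun_eq_of_execR_iff fun x y => ?_
  rcases x with x | x
  · exact hs.execR_factors_inl x y
  · have key := execR_graphRel_dagger (epiFactor f τ) (monoFactor f β) (inl x) y.swap
    rw [dagger_monoFactor, dagger_epiFactor, hs.dagger.execR_factors_inl] at key
    simpa [swap_eq_iff_eq_swap] using key.symm

end Execution

section Idempotent

variable {n k : ℕ} {f : Fin n ⊕ Fin n → Fin n ⊕ Fin n} {τ β : Fin k → Fin n}

namespace ThroughStrands

variable (hs : ThroughStrands f τ β)
include hs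

theorem comp_cup_cap_factors :
    Comp (fun a b => epiFactor f τ (inl a) = inl b) (fun a b => monoFactor f β (inr a) = inr b) =
      cupCap f := by
  funext a b
  simp [cupCap, Comp, hs.epiFactor_inl_eq_inl_iff, hs.monoFactor_inr_eq_inr_iff]

theorem Cyc_monoFactor_epiFactor : Cyc (monoFactor f β) (epiFactor f τ) = Cyc f f := by
  funext a b
  simp [Cyc, Comp, hs.epiFactor_inl_eq_inl_iff, hs.monoFactor_inr_eq_inr_iff]

theorem Z_monoFactor_epiFactor : Z (monoFactor f β) (epiFactor f τ) = Z f f := by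
  simp only [Z, hs.Cyc_monoFactor_epiFactor]

theorem not_cupCap_top (i : Fin k) (d : Fin n) : ¬ cupCap f (τ i) d :=
  fun ⟨_, hu, _⟩ => inr_ne_inl ((hs.apply_top i).symm.trans hu)

theorem cupCap_walk_of_execFun_self (hidem : execFun f f = f) (i : Fin k) :
    ReflTransGen (cupCap f) (β i) (τ i) := by
  have hne : execFun f f (inl (τ i)) ≠ inl (τ i) := by
    rw [hidem, hs.apply_top]
    exact inr_ne_inl
  have h := execR_execFun_of_ne hne
  rw [hidem, hs.apply_top] at h
  simp only [ExecR, graphRel] at h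
  obtain ⟨_, ha, c, hac, hc⟩ := h
  obtain rfl := inr_injective ((hs.apply_top i).symm.trans ha)
  obtain ⟨j, rfl, hj⟩ := hs.apply_inl_eq_inr_iff.1 hc
  obtain rfl := hs.strictMono_bot.injective hj
  exact hac

theorem execR_monoFactor_epiFactor_inl (hwalk : ∀ i, ReflTransGen (cupCap f) (β i) (τ i))
    (i : Fin k) (y : Fin k ⊕ Fin k) :
    ExecR (graphRel (monoFactor f β)) (graphRel (epiFactor f τ)) (inl i) y ↔ y = inr i := by
  rcases y with j | j
  · simp only [ExecR, graphRel, monoFactor_inl]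
    refine iff_of_false ?_ inl_ne_inr
    rintro (h | ⟨_, ha, b, hab, c, hbc, hc⟩)
    · exact inr_ne_inl h
    · obtain rfl := inr_injective ha
      rw [hs.epiFactor_inl_eq_inl_iff] at hab
      rw [hs.monoFactor_inr_eq_inl_iff] at hc
      subst hc
      have hbc' : ReflTransGen (Cyc f f) b (β j) := by
        rw [← hs.Cyc_monoFactor_epiFactor]
        exact hbc
      exact cupCap_walk_capped (hwalk i) (hs.apply_top i) hab hbc' (hs.apply_bot j)
  · simp only [ExecR, graphRel, monoFactor_inl, hs.comp_cup_cap_factors]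
    constructor
    · rintro ⟨_, ha, c, hac, hc⟩
      obtain rfl := inr_injective ha
      rw [hs.epiFactor_inl_eq_inr_iff] at hc
      subst hc
      rw [hs.strictMono_top.injective (hac.eq_of_right_unique (cupCap_rightUnique f) (hwalk i)
        (hs.not_cupCap_top j) (hs.not_cupCap_top i))]
    · rintro ⟨⟩
      exact ⟨β i, rfl, τ i, hwalk i, hs.epiFactor_inl_top i⟩

theorem execFun_monoFactor_epiFactor (hf : Function.Involutive f)
    (hwalk : ∀ i, ReflTransGen (cupCap f) (β i) (τ i)) :
    execFun (monoFactor f β) (epiFactor f τ) = swap := by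
  refine execFun_eq_of_execR_iff fun x y => ?_
  rcases x with i | i
  · exact hs.execR_monoFactor_epiFactor_inl hwalk i y
  · have hwalk' : ∀ i, ReflTransGen (cupCap (_root_.dagger f)) (τ i) (β i) := fun i => by
      rw [cupCap_dagger]
      exact reflTransGen_cyc_of_cupCap hf (hwalk i)
    have key := execR_graphRel_dagger (monoFactor f β) (epiFactor f τ) (inl i) y.swap
    rw [dagger_monoFactor, dagger_epiFactor, hs.dagger.execR_monoFactor_epiFactor_inl hwalk'] at key
    simpa [swap_eq_iff_eq_swap] using key.symm

end ThroughStrands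

end Idempotent

/-- Every idempotent in the Temperley-Lieb diagram category `D` splits: if
`i : n → n` satisfies `i ∘ i = i` then there are `e : n → k` and `m : k → n`
with `i = m ∘ e` and `e ∘ m = id_k`. -/
theorem stmt_16 (n : ℕ) (I : TLHom n n) (hI : Planar I.2)
    (hidem : TLcomp I I = I) :
    ∃ (k : ℕ) (E : TLHom n k) (M : TLHom k n),
      Planar E.2 ∧ Planar M.2 ∧
      TLcomp E M = I ∧ TLcomp M E = tlid k := by
  obtain ⟨k, τ, β, hs⟩ := hI.exists_throughStrands
  have hloops : I.1 + I.1 + Z I.2 I.2 = I.1 := congrArg Prod.fst hidem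
  have hexec : execFun I.2 I.2 = I.2 := congrArg Prod.snd hidem
  refine ⟨k, (0, epiFactor I.2 τ), (0, monoFactor I.2 β), hs.planar_epiFactor hI.1 hI.2.1,
    hs.planar_monoFactor hI.1 hI.2.1, Prod.ext ?_ hs.execFun_epiFactor_monoFactor, Prod.ext ?_
    (hs.execFun_monoFactor_epiFactor hI.1.1 (hs.cupCap_walk_of_execFun_self hexec))⟩
  · show 0 + 0 + Z _ _ = I.1
    rw [Z_eq_zero_of_not_hasCap _ (not_hasCap_epiFactor _ _)]
    omega
  · show 0 + 0 + Z _ _ = 0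
    rw [hs.Z_monoFactor_epiFactor]
    omega
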